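/- arXiv:1908.03131 — 3 statements merged into one kernel-verified Lean document; each statement's English description precedes it below -/
import Mathlib

section
/- Let k be an algebraically closed field, let V₁, V₂, U be finite-dimensional k-vector spaces with dim V₁ = dim V₂, and let B : V₁ × V₂ → U be a bilinear map with no zero-divisors (i.e. B(v₁,v₂) ≠ 0 whenever v₁ ≠ 0 and v₂ ≠ 0). Then there exists a linear form σ : U → k such that the bilinear form σ ∘ B : V₁ × V₂ → k is a perfect pairing (nondegenerate). -/
/-!
Choose `σ` so that `σ ∘ B` has a nonsingular `r × r` minor with `r` as large as possible.
If `a` is in the left kernel and `b` in the right kernel of `σ ∘ B` but `τ (B a b) ≠ 0`,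
border the minor by `a` and `b`: the bordered minor of `(σ + c τ) ∘ B` is `c` times a
polynomial in `c` that does not vanish at `0`, so it is nonzero for some `c` because `k` is
infinite, contradicting maximality. Hence `B a b = 0` for all such `a`, `b`; without zero
divisors one of the two kernels is trivial, and `dim V₁ = dim V₂` makes the pairing perfect.
-/

open Module Function

open Polynomial in
theorem Matrix.exists_det_add_smul_ne_zero {k ι : Type*} [Field k] [Infinite k]
    [Fintype ι] [DecidableEq ι] (A T : Matrix (ι ⊕ Unit) (ι ⊕ Unit) k)
    (hA : A.toBlocks₁₁.det ≠ 0) (hrow : A (.inr ()) = 0) (hcol : ∀ i, A i (.inr ()) = 0)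
    (hT : T (.inr ()) (.inr ()) ≠ 0) :
    ∃ c : k, (A + c • T).det ≠ 0 := by
  set N₀ := A.updateRow (.inr ()) (T (.inr ()))
  set N₁ := T.updateRow (.inr ()) 0
  have hsplit (c : k) : (A + c • T).det = c * (N₀ + c • N₁).det := by
    have : A + c • T = (N₀ + c • N₁).updateRow (.inr ()) (c • (N₀ + c • N₁) (.inr ())) := by
      ext i j
      rcases eq_or_ne i (.inr ()) with rfl | hi
      · simp [N₀, N₁, hrow]
      · simp [N₀, N₁, hi]
    rw [this, det_updateRow_smul, updateRow_eq_self]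
  have hN₀ : N₀.det ≠ 0 := by
    have h₁₂ : N₀.toBlocks₁₂ = 0 := by
      ext i j
      simp [N₀, toBlocks₁₂, hcol]
    rw [← fromBlocks_toBlocks N₀, h₁₂, det_fromBlocks_zero₁₂, det_unique N₀.toBlocks₂₂]
    exact mul_ne_zero (by simpa [N₀, toBlocks₁₁] using hA) (by simpa [N₀, toBlocks₂₂] using hT)
  set P : k[X] := (N₀.map C + (X : k[X]) • N₁.map C).det
  have heval (c : k) : P.eval c = (N₀ + c • N₁).det := by
    rw [← coe_evalRingHom, RingHom.map_det]
    congr 1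
    ext i j
    simp only [RingHom.mapMatrix_apply, map_apply, add_apply, smul_apply, smul_eq_mul,
      coe_evalRingHom, eval_add, eval_mul, eval_X, eval_C]
  have hXP : X * P ≠ 0 := mul_ne_zero X_ne_zero fun hP => hN₀ <| by
    simpa [hP] using (heval 0).symm
  obtain ⟨c, hc⟩ := not_forall.mp (mt (zero_of_eval_zero _) hXP)
  exact ⟨c, by simpa [hsplit, heval] using hc⟩

namespace LinearMap

variable {k V₁ V₂ : Type*} [Field k] [AddCommGroup V₁] [Module k V₁] [AddCommGroup V₂]
  [Module k V₂]

def pairingMatrix {ι : Type*} (f : V₁ →ₗ[k] V₂ →ₗ[k] k) (p : ι → V₁) (q : ι → V₂) :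
    Matrix ι ι k :=
  Matrix.of fun i j => f (p i) (q j)

theorem linearIndependent_of_det_pairingMatrix_ne_zero {ι : Type*} [Fintype ι] [DecidableEq ι]
    {f : V₁ →ₗ[k] V₂ →ₗ[k] k} {p : ι → V₁} {q : ι → V₂}
    (h : (f.pairingMatrix p q).det ≠ 0) : LinearIndependent k p :=
  (Matrix.linearIndependent_rows_of_det_ne_zero h).of_comp (LinearMap.pi fun j => f.flip (q j))

theorem exists_det_pairingMatrix_add_smul_ne_zero [Infinite k] {ι : Type*} [Fintype ι]
    [DecidableEq ι] {f g : V₁ →ₗ[k] V₂ →ₗ[k] k} {p : ι → V₁} {q : ι → V₂}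
    (hpq : (f.pairingMatrix p q).det ≠ 0) {a : V₁} {b : V₂} (ha : f a = 0) (hb : f.flip b = 0)
    (hab : g a b ≠ 0) :
    ∃ c : k, ((f + c • g).pairingMatrix (Sum.elim p fun _ : Unit => a)
      (Sum.elim q fun _ : Unit => b)).det ≠ 0 :=
  Matrix.exists_det_add_smul_ne_zero _ (g.pairingMatrix _ _) hpq (by ext; simp [ha])
    (fun i => by simpa [pairingMatrix] using LinearMap.congr_fun hb _) hab

theorem exists_compr₂_forall_ker_apply_eq_zero [Infinite k] [FiniteDimensional k V₁]
    {U : Type*} [AddCommGroup U] [Module k U] (B : V₁ →ₗ[k] V₂ →ₗ[k] U) :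
    ∃ σ : U →ₗ[k] k, ∀ a b, B.compr₂ σ a = 0 → (B.compr₂ σ).flip b = 0 → B a b = 0 := by
  classical
  let HasMinor (r : ℕ) : Prop := ∃ (σ : U →ₗ[k] k) (p : Fin r → V₁) (q : Fin r → V₂),
    ((B.compr₂ σ).pairingMatrix p q).det ≠ 0
  have hbound (r : ℕ) : HasMinor r → r ≤ finrank k V₁ := fun ⟨_, _, _, h⟩ => by
    simpa using (linearIndependent_of_det_pairingMatrix_ne_zero h).fintype_card_le_finrank
  set r := Nat.findGreatest HasMinor (finrank k V₁)
  obtain ⟨σ, p, q, hpq⟩ : HasMinor r :=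
    Nat.findGreatest_spec (Nat.zero_le _) ⟨0, Fin.elim0, Fin.elim0, by simp⟩
  refine ⟨σ, fun a b ha hb => by_contra fun hab => ?_⟩
  obtain ⟨τ, hτ⟩ := Projective.exists_dual_ne_zero k hab
  obtain ⟨c, hc⟩ := exists_det_pairingMatrix_add_smul_ne_zero (g := B.compr₂ τ) hpq ha hb hτ
  have hr : HasMinor (r + 1) := by
    let e := Fintype.equivFinOfCardEq (by simp : Fintype.card (Fin r ⊕ Unit) = r + 1)
    refine ⟨σ + c • τ, Sum.elim p (fun _ => a) ∘ e.symm, Sum.elim q (fun _ => b) ∘ e.symm, ?_⟩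
    -- `B.compr₂ (σ + c • τ)` is definitionally `B.compr₂ σ + c • B.compr₂ τ`.
    rwa [← Matrix.det_submatrix_equiv_self e.symm] at hc
  exact Nat.findGreatest_is_greatest (lt_add_one r) (hbound _ hr) hr

theorem bijective_and_flip_bijective_of_injective_or
    [FiniteDimensional k V₁] [FiniteDimensional k V₂] (hdim : finrank k V₁ = finrank k V₂)
    {f : V₁ →ₗ[k] V₂ →ₗ[k] k} (h : Injective f ∨ Injective f.flip) :
    Bijective f ∧ Bijective f.flip := by
  have hdual : finrank k V₁ = finrank k (V₂ →ₗ[k] k) := hdim.trans Subspace.dual_finrank_eq.symm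
  have hf : Surjective f := by
    rcases h with h | h
    · exact (injective_iff_surjective_of_finrank_eq_finrank hdual).mp h
    · exact flip_injective_iff₁.mp h
  replace hf : Bijective f := ⟨(injective_iff_surjective_of_finrank_eq_finrank hdual).mpr hf, hf⟩
  exact ⟨hf, flip_bijective_iff₁.mpr hf⟩

end LinearMap

theorem stmt0_general (k V₁ V₂ U : Type*) [Field k] [IsAlgClosed k]
    [AddCommGroup V₁] [Module k V₁] [FiniteDimensional k V₁]
    [AddCommGroup V₂] [Module k V₂] [FiniteDimensional k V₂]
    [AddCommGroup U] [Module k U]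
    (hdim : Module.finrank k V₁ = Module.finrank k V₂)
    (B : V₁ →ₗ[k] V₂ →ₗ[k] U)
    (hB : ∀ v₁ v₂, v₁ ≠ 0 → v₂ ≠ 0 → B v₁ v₂ ≠ 0) :
    ∃ σ : U →ₗ[k] k,
      Function.Bijective ((B.compr₂ σ) : V₁ →ₗ[k] (V₂ →ₗ[k] k)) ∧
      Function.Bijective ((B.compr₂ σ).flip : V₂ →ₗ[k] (V₁ →ₗ[k] k)) := by
  obtain ⟨σ, hσ⟩ := B.exists_compr₂_forall_ker_apply_eq_zero
  refine ⟨σ, LinearMap.bijective_and_flip_bijective_of_injective_or hdim ?_⟩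
  by_contra! h
  simp only [injective_iff_map_eq_zero, not_forall, exists_prop] at h
  obtain ⟨⟨a, ha, ha0⟩, b, hb, hb0⟩ := h
  exact hB a b ha0 hb0 (hσ a b ha hb)

/-- Let `k` be an algebraically closed field, `V₁, V₂, U`
finite-dimensional `k`-vector spaces with `dim V₁ = dim V₂`, and
`B : V₁ × V₂ → U` a bilinear map with no zero-divisors. Then there exists a
linear form `σ : U → k` such that `σ ∘ B` is a perfect pairing, i.e. the two
induced maps `V₁ → V₂*` and `V₂ → V₁*` are bijective. -/
theorem stmt0 (k V₁ V₂ U : Type*) [Field k] [IsAlgClosed k]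
    [AddCommGroup V₁] [Module k V₁] [FiniteDimensional k V₁]
    [AddCommGroup V₂] [Module k V₂] [FiniteDimensional k V₂]
    [AddCommGroup U] [Module k U] [FiniteDimensional k U]
    (hdim : Module.finrank k V₁ = Module.finrank k V₂)
    (B : V₁ →ₗ[k] V₂ →ₗ[k] U)
    (hB : ∀ v₁ v₂, v₁ ≠ 0 → v₂ ≠ 0 → B v₁ v₂ ≠ 0) :
    ∃ σ : U →ₗ[k] k,
      Function.Bijective ((B.compr₂ σ) : V₁ →ₗ[k] (V₂ →ₗ[k] k)) ∧
      Function.Bijective ((B.compr₂ σ).flip : V₂ →ₗ[k] (V₁ →ₗ[k] k)) :=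
  stmt0_general k V₁ V₂ U hdim B hB
end

section
/- Let V, V' be finite-dimensional vector spaces over a field k of the same dimension. The map Isom(V,V')/k* → Isom(End(V), End(V')), sending the class of g to the algebra isomorphism f ↦ g ∘ f ∘ g⁻¹, is a bijection. -/
theorem stmt4_general (k V V' : Type*) [Field k]
    [AddCommGroup V] [Module k V]
    [AddCommGroup V'] [Module k V'] :
    (∀ Φ : (Module.End k V) ≃ₐ[k] (Module.End k V'),
      ∃ g : V ≃ₗ[k] V', ∀ (f : Module.End k V) (v : V),
        Φ f (g v) = g (f v)) ∧
    (∀ g₁ g₂ : V ≃ₗ[k] V',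
      (∀ (f : Module.End k V) (v : V'), g₁ (f (g₁.symm v)) = g₂ (f (g₂.symm v))) →
      ∃ c : kˣ, ∀ v : V, g₁ v = (c : k) • g₂ v) := by
  refine ⟨fun Φ ↦ ?_, fun g₁ g₂ hconj ↦ ?_⟩
  · obtain ⟨g, rfl⟩ := Φ.eq_linearEquivConjAlgEquiv
    exact ⟨g, fun f v ↦ by simp⟩
  · have hΦ : g₁.conjAlgEquiv k = g₂.conjAlgEquiv k :=
      AlgEquiv.ext fun f ↦ LinearMap.ext (hconj f)
    obtain ⟨c, hc⟩ := (LinearEquiv.conjAlgEquiv_ext_iff' g₁ g₂).mp hΦ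
    exact ⟨c, fun v ↦ congr($hc v)⟩

/-- Skolem–Noether. For finite-dimensional `k`-vector spaces
`V`, `V'` of the same dimension, the map
`Isom(V,V')/kˣ → Isom(End(V), End(V'))`, `[g] ↦ (f ↦ g ∘ f ∘ g⁻¹)`,
is a bijection: every `k`-algebra isomorphism `End(V) ≅ End(V')` is conjugation
by some linear isomorphism `g : V ≅ V'` (surjectivity), and two such `g` induce
the same algebra isomorphism iff they differ by a scalar in `kˣ`
(injectivity). -/
theorem stmt4 (k V V' : Type*) [Field k]
    [AddCommGroup V] [Module k V] [FiniteDimensional k V]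
    [AddCommGroup V'] [Module k V'] [FiniteDimensional k V']
    (hdim : Module.finrank k V = Module.finrank k V') :
    (∀ Φ : (Module.End k V) ≃ₐ[k] (Module.End k V'),
      ∃ g : V ≃ₗ[k] V', ∀ (f : Module.End k V) (v : V),
        Φ f (g v) = g (f v)) ∧
    (∀ g₁ g₂ : V ≃ₗ[k] V',
      (∀ (f : Module.End k V) (v : V'), g₁ (f (g₁.symm v)) = g₂ (f (g₂.symm v))) →
      ∃ c : kˣ, ∀ v : V, g₁ v = (c : k) • g₂ v) :=
  stmt4_general k V V'
end

section
/- Let E be a field with a nontrivial involution ι with fixed field F = E^ι, and let A be a central simple E-algebra. If A has an involution of the second kind extending ι (an ι-semilinear ring anti-automorphism of order 2), then for any central simple E-algebra B Brauer-equivalent to A, B also admits an involution of the second kind extending ι. -/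
/-!
Conjugate transposition turns `τ` into an involution of `Mₙ(A)`, and the isomorphism
`Mₙ(A) ≅ Mₘ(B)` carries it to an involution `Θ` of `C = Mₘ(B)`, in which `B` is the corner
`e C e` of the idempotent `e = E₁₁`. If `e = p q` and `Θ e = q p` with `p`, `q` both
`Θ`-symmetric, then `x ↦ p Θ(x) q` is an involution of the second kind of `e C e`.

Such a factorization exists for every idempotent of a simple Artinian ring: it is additive over
orthogonal idempotents, so it suffices to treat a minimal idempotent `ε`. There the hermitian
form `x ↦ Θ(x) x` on `C ε` is not identically zero, by polarization (since `ι ≠ 1`) and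
simplicity of `C`. A nonzero value `w = Θ(x) x` is symmetric and, `C ε` being a minimal left
ideal, has a left inverse `c` with `c w = ε`; applying `Θ` shows that `ε c Θ(ε)` is a symmetric
two-sided inverse of `w`.
-/

open scoped TensorProduct

/-- An involution of the second kind on an `E`-algebra `A`, extending a given
automorphism `ι` of `E`: an additive, anti-multiplicative, `ι`-semilinear map
`τ : A → A` with `τ² = id`. -/
def IsSecondKindInvolution {F E A : Type*} [Field F] [Field E] [Algebra F E]
    [Ring A] [Algebra E A] (ι : E ≃ₐ[F] E) (τ : A → A) : Prop :=
  (∀ x y : A, τ (x + y) = τ x + τ y) ∧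
  (∀ x y : A, τ (x * y) = τ y * τ x) ∧
  (∀ (c : E) (x : A), τ (c • x) = ι c • τ x) ∧
  (∀ x : A, τ (τ x) = x) ∧ τ 1 = 1

open scoped Matrix

theorem IsSimpleRing.eq_zero_of_forall_mul_mul_eq_zero {R : Type*} [Ring R] [IsSimpleRing R]
    {p q : R} (hq : q ≠ 0) (h : ∀ c, p * c * q = 0) : p = 0 := by
  let I : TwoSidedIdeal R := .mk' {x | ∀ c, p * c * x = 0} (fun _ => mul_zero _)
    (fun hx hy c => by rw [mul_add, hx c, hy c, add_zero])
    (fun hx c => by rw [mul_neg, hx c, neg_zero])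
    (fun {x y} hy c => by simpa only [mul_assoc] using hy (c * x))
    (fun {x y} hx c => by rw [← mul_assoc, hx c, zero_mul])
  have h1 : (1 : R) ∈ I := one_mem_of_ne_zero_mem I hq ((TwoSidedIdeal.mem_mk' ..).mpr h)
  simpa using (TwoSidedIdeal.mem_mk' ..).mp h1 1

theorem IsIdempotentElem.mem_span_singleton_iff {R : Type*} [Ring R] {ε x : R}
    (hε : IsIdempotentElem ε) : x ∈ Submodule.span R {ε} ↔ x * ε = x := by
  refine ⟨fun hx => ?_, fun hx => Submodule.mem_span_singleton.mpr ⟨x, hx⟩⟩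
  obtain ⟨a, rfl⟩ := Submodule.mem_span_singleton.mp hx
  rw [smul_eq_mul, mul_assoc, hε.eq]

section Idempotents

variable {R : Type*} [Ring R]

theorem exists_isAtom_span_singleton_le [IsSemisimpleRing R] {e : R} (he : IsIdempotentElem e)
    (he0 : e ≠ 0) : ∃ ε : R, IsIdempotentElem ε ∧ ε * e = ε ∧ e * ε = ε ∧
      IsAtom (Submodule.span R {ε}) := by
  obtain ⟨L, hL, hLe⟩ := (eq_bot_or_exists_atom_le (Submodule.span R {e})).resolve_left
    (mt Submodule.span_singleton_eq_bot.mp he0)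
  obtain ⟨ε₀, hε₀, rfl⟩ := IsSemisimpleRing.ideal_eq_span_idempotent L
  have hε₀e : ε₀ * e = ε₀ := (he.mem_span_singleton_iff).mp
    (hLe (Submodule.mem_span_singleton_self ε₀))
  refine ⟨e * ε₀, ?_, by rw [mul_assoc, hε₀e], by rw [← mul_assoc, he.eq], ?_⟩
  · rw [IsIdempotentElem, mul_assoc, ← mul_assoc ε₀, hε₀e, hε₀.eq]
  · convert hL using 1
    refine le_antisymm (Submodule.span_singleton_le_iff_mem _ _ |>.mpr
      (Submodule.smul_mem _ e (Submodule.mem_span_singleton_self ε₀))) ?_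
    rw [Submodule.span_singleton_le_iff_mem, Submodule.mem_span_singleton]
    exact ⟨ε₀, by rw [smul_eq_mul, ← mul_assoc, hε₀e, hε₀.eq]⟩

theorem span_singleton_sub_lt {e ε : R} (he : IsIdempotentElem e) (hε : IsIdempotentElem ε)
    (hε0 : ε ≠ 0) (hεe : ε * e = ε) (heε : e * ε = ε) :
    Submodule.span R {e - ε} < Submodule.span R {e} := by
  refine lt_of_le_of_ne ?_ fun heq => hε0 ?_
  · rw [Submodule.span_singleton_le_iff_mem, Submodule.mem_span_singleton]
    exact ⟨e - ε, by rw [smul_eq_mul, sub_mul, he.eq, hεe]⟩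
  · have : ε ∈ Submodule.span R {e - ε} :=
      heq ▸ Submodule.mem_span_singleton.mpr ⟨ε, hεe⟩
    obtain ⟨a, ha⟩ := Submodule.mem_span_singleton.mp this
    rw [← hε.eq]
    nth_rewrite 1 [← ha]
    rw [smul_eq_mul, mul_assoc, sub_mul, heε, hε.eq, sub_self, mul_zero]

end Idempotents

namespace IsSecondKindInvolution

variable {F E C : Type*} [Field F] [Field E] [Algebra F E] [Ring C] [Algebra E C]
  {ι : E ≃ₐ[F] E} {Θ : C → C}

theorem map_add (hΘ : IsSecondKindInvolution ι Θ) (x y : C) : Θ (x + y) = Θ x + Θ y :=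
  hΘ.1 x y

theorem map_mul (hΘ : IsSecondKindInvolution ι Θ) (x y : C) : Θ (x * y) = Θ y * Θ x :=
  hΘ.2.1 x y

theorem map_smul (hΘ : IsSecondKindInvolution ι Θ) (c : E) (x : C) : Θ (c • x) = ι c • Θ x :=
  hΘ.2.2.1 c x

theorem apply_apply (hΘ : IsSecondKindInvolution ι Θ) (x : C) : Θ (Θ x) = x :=
  hΘ.2.2.2.1 x

theorem map_one (hΘ : IsSecondKindInvolution ι Θ) : Θ 1 = 1 :=
  hΘ.2.2.2.2

theorem map_zero (hΘ : IsSecondKindInvolution ι Θ) : Θ 0 = 0 := by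
  simpa using hΘ.map_add 0 0

theorem eq_zero_iff (hΘ : IsSecondKindInvolution ι Θ) {x : C} : Θ x = 0 ↔ x = 0 :=
  ⟨fun h => by rw [← hΘ.apply_apply x, h, hΘ.map_zero], fun h => h ▸ hΘ.map_zero⟩

theorem isIdempotentElem_apply (hΘ : IsSecondKindInvolution ι Θ) {e : C}
    (he : IsIdempotentElem e) : IsIdempotentElem (Θ e) := by
  rw [IsIdempotentElem, ← hΘ.map_mul, he.eq]

theorem conj_algEquiv {C' : Type*} [Ring C'] [Algebra E C'] (hΘ : IsSecondKindInvolution ι Θ)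
    (φ : C ≃ₐ[E] C') : IsSecondKindInvolution ι (fun x => φ (Θ (φ.symm x))) :=
  ⟨fun x y => by simp [hΘ.map_add], fun x y => by simp [hΘ.map_mul],
    fun c x => by simp [hΘ.map_smul], fun x => by simp [hΘ.apply_apply], by simp [hΘ.map_one]⟩

theorem transpose_map (hΘ : IsSecondKindInvolution ι Θ) (n : Type*) [Fintype n]
    [DecidableEq n] :
    IsSecondKindInvolution ι (fun M : Matrix n n C => (M.map Θ)ᵀ) := by
  refine ⟨fun M N => ?_, fun M N => ?_, fun c M => ?_, fun M => ?_, ?_⟩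
  · ext i j; simp [hΘ.map_add]
  · ext i j
    simp only [Matrix.transpose_apply, Matrix.map_apply, Matrix.mul_apply]
    rw [← AddMonoidHom.mk'_apply Θ hΘ.map_add, map_sum]
    simp [hΘ.map_mul]
  · ext i j; simp [hΘ.map_smul]
  · ext i j; simp [hΘ.apply_apply]
  · simp only [Matrix.map_one Θ hΘ.map_zero hΘ.map_one, Matrix.transpose_one]

/-- Polarize, then compare `x` with `c • x` for a scalar `c` moved by `ι`. -/
theorem apply_mul_eq_zero_of_forall (hΘ : IsSecondKindInvolution ι Θ) (hι : ∃ c, ι c ≠ c)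
    {S : Submodule E C} (hS : ∀ x ∈ S, Θ x * x = 0) {x y : C} (hx : x ∈ S) (hy : y ∈ S) :
    Θ x * y = 0 := by
  have polar : ∀ x ∈ S, Θ x * y + Θ y * x = 0 := fun x hx => by
    have := hS _ (S.add_mem hx hy)
    rw [hΘ.map_add, add_mul, mul_add, mul_add, hS x hx, hS y hy] at this
    simpa using this
  obtain ⟨c, hc⟩ := hι
  have hcx := polar (c • x) (S.smul_mem c hx)
  rw [hΘ.map_smul, smul_mul_assoc, mul_smul_comm, eq_neg_of_add_eq_zero_right (polar x hx),
    smul_neg, ← sub_eq_add_neg, ← sub_smul] at hcx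
  exact (smul_eq_zero.mp hcx).resolve_left (sub_ne_zero.mpr hc)

theorem exists_apply_mul_self_ne_zero [IsSimpleRing C] (hΘ : IsSecondKindInvolution ι Θ)
    (hι : ∃ c, ι c ≠ c) {ε : C} (hε0 : ε ≠ 0) :
    ∃ x ∈ Submodule.span C {ε}, Θ x * x ≠ 0 := by
  by_contra! hiso
  set S := (Submodule.span C {ε}).restrictScalars E
  have hvanish : ∀ d, Θ ε * d * ε = 0 := fun d => by
    have hd : Θ d * ε ∈ S := Submodule.smul_mem _ _ (Submodule.mem_span_singleton_self ε)
    have := hΘ.apply_mul_eq_zero_of_forall hι hiso hd (Submodule.mem_span_singleton_self ε)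
    rwa [hΘ.map_mul, hΘ.apply_apply] at this
  exact hε0 (hΘ.eq_zero_iff.mp (IsSimpleRing.eq_zero_of_forall_mul_mul_eq_zero hε0 hvanish))

end IsSecondKindInvolution

structure IsSymmetricFactorization {C : Type*} [Mul C] (Θ : C → C) (e p q : C) : Prop where
  idem_mul : e * p = p
  mul_idem : q * e = q
  mul_eq_idem : p * q = e
  mul_eq_apply_idem : q * p = Θ e
  apply_left : Θ p = p
  apply_right : Θ q = q

namespace IsSymmetricFactorization

variable {F E C : Type*} [Field F] [Field E] [Algebra F E] [Ring C] [Algebra E C]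
  {ι : E ≃ₐ[F] E} {Θ : C → C} {e p q : C}

theorem mul_apply_idem (h : IsSymmetricFactorization Θ e p q) : p * Θ e = p := by
  rw [← h.mul_eq_apply_idem, ← mul_assoc, h.mul_eq_idem, h.idem_mul]

theorem apply_idem_mul (h : IsSymmetricFactorization Θ e p q) : Θ e * q = q := by
  rw [← h.mul_eq_apply_idem, mul_assoc, h.mul_eq_idem, h.mul_idem]

theorem zero (hΘ : IsSecondKindInvolution ι Θ) : IsSymmetricFactorization Θ 0 0 0 := by
  constructor <;> simp [hΘ.map_zero]

theorem add (hΘ : IsSecondKindInvolution ι Θ) {f p' q' : C}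
    (h : IsSymmetricFactorization Θ e p q) (h' : IsSymmetricFactorization Θ f p' q')
    (hef : e * f = 0) (hfe : f * e = 0) :
    IsSymmetricFactorization Θ (e + f) (p + p') (q + q') := by
  have hep' : e * p' = 0 := by rw [← h'.idem_mul, ← mul_assoc, hef, zero_mul]
  have hfp : f * p = 0 := by rw [← h.idem_mul, ← mul_assoc, hfe, zero_mul]
  have hqf : q * f = 0 := by rw [← h.mul_idem, mul_assoc, hef, mul_zero]
  have hq'e : q' * e = 0 := by rw [← h'.mul_idem, mul_assoc, hfe, mul_zero]
  have hpq' : p * q' = 0 := by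
    rw [← h.mul_apply_idem, ← h'.apply_idem_mul, mul_assoc, ← mul_assoc (Θ e), ← hΘ.map_mul,
      hfe, hΘ.map_zero, zero_mul, mul_zero]
  have hp'q : p' * q = 0 := by
    rw [← h'.mul_apply_idem, ← h.apply_idem_mul, mul_assoc, ← mul_assoc (Θ f), ← hΘ.map_mul,
      hef, hΘ.map_zero, zero_mul, mul_zero]
  have hqp' : q * p' = 0 := by rw [← h.mul_idem, ← h'.idem_mul, mul_assoc, ← mul_assoc e, hef,
    zero_mul, mul_zero]
  have hq'p : q' * p = 0 := by rw [← h'.mul_idem, ← h.idem_mul, mul_assoc, ← mul_assoc f, hfe,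
    zero_mul, mul_zero]
  constructor <;>
    simp only [add_mul, mul_add, hΘ.map_add, h.idem_mul, h'.idem_mul, h.mul_idem, h'.mul_idem,
      h.mul_eq_idem, h'.mul_eq_idem, h.mul_eq_apply_idem, h'.mul_eq_apply_idem, h.apply_left,
      h'.apply_left, h.apply_right, h'.apply_right, hep', hfp, hqf, hq'e, hpq', hp'q, hqp', hq'p,
      add_zero, zero_add]

theorem of_mul_eq (hΘ : IsSecondKindInvolution ι Θ) {ε w c : C} (hε : IsIdempotentElem ε)
    (hw : Θ w = w) (hwε : w * ε = w) (hεw : Θ ε * w = w) (hcw : c * w = ε) :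
    IsSymmetricFactorization Θ ε (ε * c * Θ ε) w := by
  set p := ε * c * Θ ε
  have hpΘ : p * Θ ε = p := by rw [mul_assoc, (hΘ.isIdempotentElem_apply hε).eq]
  have hpw : p * w = ε := by rw [mul_assoc, hεw, mul_assoc, hcw, hε.eq]
  have hwΘp : w * Θ p = Θ ε := by simpa only [hΘ.map_mul, hw] using congrArg Θ hpw
  have hΘp : Θ p = p := by
    have hεΘp : ε * Θ p = Θ p := by rw [← hΘ.apply_apply ε, ← hΘ.map_mul, hpΘ]
    rw [← hεΘp, ← hpw, mul_assoc, hwΘp, hpΘ]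
  exact ⟨by rw [← mul_assoc, ← mul_assoc, hε.eq], hwε, hpw, hΘp ▸ hwΘp, hΘp, hw⟩

theorem conj_mul (hΘ : IsSecondKindInvolution ι Θ) (h : IsSymmetricFactorization Θ e p q)
    (x : C) {y : C} (hy : e * y = y) :
    p * Θ (x * y) * q = p * Θ y * q * (p * Θ x * q) :=
  calc p * Θ (x * y) * q = p * (Θ y * Θ e) * Θ x * q := by
        rw [← hΘ.map_mul, hy, hΘ.map_mul]; simp only [mul_assoc]
    _ = p * Θ y * q * (p * Θ x * q) := by
        rw [← h.mul_eq_apply_idem]; simp only [mul_assoc]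

theorem conj_conj (hΘ : IsSecondKindInvolution ι Θ) (h : IsSymmetricFactorization Θ e p q)
    (x : C) : p * Θ (p * Θ x * q) * q = e * x * e := by
  rw [hΘ.map_mul, hΘ.map_mul, hΘ.apply_apply, h.apply_left, h.apply_right, ← h.mul_eq_idem]
  simp only [mul_assoc]

theorem isSecondKindInvolution_corner {B : Type*} [Ring B] [Algebra E B]
    (hΘ : IsSecondKindInvolution ι Θ) (h : IsSymmetricFactorization Θ e p q) (j : B →ₙₐ[E] C)
    (π : C → B) (hπj : ∀ b, π (j b) = b) (hjπ : ∀ x, j (π x) = e * x * e) (hj1 : j 1 = e) :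
    IsSecondKindInvolution ι (fun b => π (p * Θ (j b) * q)) := by
  set τ : B → B := fun b => π (p * Θ (j b) * q)
  have hj : Function.Injective j := Function.LeftInverse.injective hπj
  have hej : ∀ b, e * j b = j b := fun b => by rw [← hj1, ← map_mul, one_mul]
  have hje : ∀ b, j b * e = j b := fun b => by rw [← hj1, ← map_mul, mul_one]
  have hjτ : ∀ b, j (τ b) = p * Θ (j b) * q := fun b => by
    rw [hjπ, ← mul_assoc e, ← mul_assoc e, h.idem_mul, mul_assoc _ q e, h.mul_idem]
  refine ⟨fun x y => hj ?_, fun x y => hj ?_, fun c x => hj ?_, fun x => hj ?_, hj ?_⟩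
  · simp only [hjτ, map_add, hΘ.map_add, mul_add, add_mul]
  · simp only [hjτ, map_mul, h.conj_mul hΘ _ (hej y)]
  · simp only [hjτ, map_smul, hΘ.map_smul, smul_mul_assoc, mul_smul_comm]
  · rw [hjτ, hjτ, h.conj_conj hΘ, hej, hje]
  · rw [hjτ, hj1, h.mul_apply_idem, h.mul_eq_idem]

end IsSymmetricFactorization

namespace IsSecondKindInvolution

variable {F E C : Type*} [Field F] [Field E] [Algebra F E] [Ring C] [Algebra E C]
  {ι : E ≃ₐ[F] E} {Θ : C → C}

theorem exists_isSymmetricFactorization_of_isAtom [IsSimpleRing C]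
    (hΘ : IsSecondKindInvolution ι Θ) (hι : ∃ c, ι c ≠ c) {ε : C} (hε : IsIdempotentElem ε)
    (hatom : IsAtom (Submodule.span C {ε})) : ∃ p q, IsSymmetricFactorization Θ ε p q := by
  have hε0 : ε ≠ 0 := fun h => hatom.ne_bot (by simp [h])
  obtain ⟨x, hx, hxx⟩ := hΘ.exists_apply_mul_self_ne_zero hι hε0
  have hxε : x * ε = x := hε.mem_span_singleton_iff.mp hx
  have hw : Submodule.span C {Θ x * x} = Submodule.span C {ε} :=
    (hatom.le_iff_eq (by simpa [Submodule.span_singleton_eq_bot] using hxx)).mp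
      ((Submodule.span_singleton_le_iff_mem _ _).mpr (Submodule.smul_mem _ _ hx))
  obtain ⟨c, hc⟩ := Submodule.mem_span_singleton.mp (hw ▸ Submodule.mem_span_singleton_self ε)
  exact ⟨_, _, .of_mul_eq hΘ hε (by rw [hΘ.map_mul, hΘ.apply_apply]) (by rw [mul_assoc, hxε])
    (by rw [← mul_assoc, ← hΘ.map_mul, hxε]) hc⟩

/-- Split off a minimal idempotent and induct on the left ideal `C e`. -/
theorem exists_isSymmetricFactorization [IsSimpleRing C] [IsArtinianRing C]
    (hΘ : IsSecondKindInvolution ι Θ) (hι : ∃ c, ι c ≠ c) {e : C} (he : IsIdempotentElem e) :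
    ∃ p q, IsSymmetricFactorization Θ e p q := by
  induction hN : Submodule.span C {e} using WellFoundedLT.induction generalizing e with
  | _ N ih =>
  rcases eq_or_ne e 0 with rfl | he0
  · exact ⟨0, 0, .zero hΘ⟩
  obtain ⟨ε, hε, hεe, heε, hatom⟩ := exists_isAtom_span_singleton_le he he0
  have hε0 : ε ≠ 0 := fun h => hatom.ne_bot (by simp [h])
  have hf : IsIdempotentElem (e - ε) := by
    rw [IsIdempotentElem, sub_mul, mul_sub, mul_sub, he.eq, hεe, heε, hε.eq, sub_self, sub_zero]
  have hεf : ε * (e - ε) = 0 := by rw [mul_sub, hεe, hε.eq, sub_self]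
  have hfε : (e - ε) * ε = 0 := by rw [sub_mul, heε, hε.eq, sub_self]
  obtain ⟨p, q, h⟩ := hΘ.exists_isSymmetricFactorization_of_isAtom hι hε hatom
  obtain ⟨p', q', h'⟩ :=
    ih _ (hN ▸ span_singleton_sub_lt he hε hε0 hεe heε) hf rfl
  exact ⟨_, _, add_sub_cancel ε e ▸ h.add hΘ h' hεf hfε⟩

end IsSecondKindInvolution

def Matrix.singleNonUnitalAlgHom {E B n : Type*} [CommSemiring E] [Semiring B] [Module E B]
    [Fintype n] [DecidableEq n] (i : n) : B →ₙₐ[E] Matrix n n B where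
  toFun := Matrix.single i i
  map_smul' c b := (Matrix.smul_single c i i b).symm
  map_zero' := Matrix.single_zero i i
  map_add' := Matrix.single_add i i
  map_mul' a b := (Matrix.single_mul_single_same (c := a) i i i b).symm

theorem stmt5_general (F E A B : Type*) [Field F] [Field E] [Algebra F E]
    (ι : E ≃ₐ[F] E) (hι : ι ≠ AlgEquiv.refl)
    [Ring A] [Algebra E A]
    [Ring B] [Algebra E B] [IsSimpleRing B]
    [FiniteDimensional E B]
    (hBrauer : ∃ n m : ℕ, 0 < n ∧ 0 < m ∧
      Nonempty ((A ⊗[E] Matrix (Fin n) (Fin n) E) ≃ₐ[E]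
                (B ⊗[E] Matrix (Fin m) (Fin m) E)))
    (hA : ∃ τ : A → A, IsSecondKindInvolution ι τ) :
    ∃ τ : B → B, IsSecondKindInvolution ι τ := by
  obtain ⟨n, m, -, hm, ⟨φ⟩⟩ := hBrauer
  obtain ⟨τ, hτ⟩ := hA
  have hι' : ∃ c, ι c ≠ c := by
    by_contra! h
    exact hι (AlgEquiv.ext h)
  let z : Fin m := ⟨0, hm⟩
  have : Nonempty (Fin m) := ⟨z⟩
  have : IsArtinianRing B := IsArtinianRing.of_finite E B
  let f : Matrix (Fin n) (Fin n) A ≃ₐ[E] Matrix (Fin m) (Fin m) B :=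
    (matrixEquivTensor (Fin n) E A).trans (φ.trans (matrixEquivTensor (Fin m) E B).symm)
  have hΘ := (hτ.transpose_map (Fin n)).conj_algEquiv f
  obtain ⟨p, q, h⟩ := hΘ.exists_isSymmetricFactorization hι'
    (e := Matrix.single z z 1) (by rw [IsIdempotentElem, Matrix.single_mul_single_same, mul_one])
  exact ⟨_, h.isSecondKindInvolution_corner hΘ (Matrix.singleNonUnitalAlgHom z) (· z z)
    (Matrix.single_apply_same z z) (fun X => by simp [Matrix.singleNonUnitalAlgHom]) rfl⟩

/-- Let `E/F` be a quadratic extension with nontrivial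
involution `ι` (fixed field `F`), and let `A`, `B` be central simple
`E`-algebras which are Brauer-equivalent (`A ⊗ Mₙ(E) ≅ B ⊗ Mₘ(E)`). If `A`
admits an involution of the second kind extending `ι`, then so does `B`. -/
theorem stmt5 (F E A B : Type*) [Field F] [Field E] [Algebra F E]
    (ι : E ≃ₐ[F] E) (hι : ι ≠ AlgEquiv.refl)
    (hfix : ∀ x : E, ι x = x → x ∈ (algebraMap F E).range)
    [Ring A] [Algebra E A] [Algebra.IsCentral E A] [IsSimpleRing A]
    [FiniteDimensional E A]
    [Ring B] [Algebra E B] [Algebra.IsCentral E B] [IsSimpleRing B]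
    [FiniteDimensional E B]
    (hBrauer : ∃ n m : ℕ, 0 < n ∧ 0 < m ∧
      Nonempty ((A ⊗[E] Matrix (Fin n) (Fin n) E) ≃ₐ[E]
                (B ⊗[E] Matrix (Fin m) (Fin m) E)))
    (hA : ∃ τ : A → A, IsSecondKindInvolution ι τ) :
    ∃ τ : B → B, IsSecondKindInvolution ι τ :=
  stmt5_general F E A B ι hι hBrauer hA
end
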